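/- arXiv:2002.08797 — 2 statements merged into one kernel-verified Lean document; each statement's English description precedes it below -/
import Mathlib

section
/- For the ReLU correlation function f(c) = (1/π)(c·arcsin(c) + √(1−c²)) + c/2, one has the asymptotic expansion f(x) = x + (2√2/(3π))(1−x)^{3/2} + O((1−x)^{5/2}) as x → 1⁻; in particular, (f(x) − x)/(1−x)^{3/2} tends to 2√2/(3π) as x → 1⁻. -/
open Real Set Filter Topology

noncomputable def reluCorr (c : ℝ) : ℝ :=
  (1 / π) * (c * Real.arcsin c + Real.sqrt (1 - c ^ 2)) + c / 2

/-!
Since `arcsin = π / 2 - arccos` and `√(1 - x²) - x arccos x` has derivative `-arccos x`,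
one has `π (f x - x) = ∫ u in x..1, arccos u`. Writing `u = cos θ`, so that
`√(1 - u) = √2 sin (θ / 2)`, the bounds `sin φ ≤ φ ≤ sin φ + φ³ / 6` and Jordan's
`φ ≤ (π / 2) sin φ` give
`√2 √(1 - u) ≤ arccos u ≤ √2 √(1 - u) + (π³ / 24) (1 - u)^{3/2}`.
Integrating, `f x - x` is `(2√2 / (3π)) (1 - x)^{3/2}` up to a remainder between `0` and
`(π² / 60) (1 - x)^{5/2}`.
-/

open intervalIntegral

lemma reluCorr_sub_self (x : ℝ) : reluCorr x - x = (√(1 - x ^ 2) - x * arccos x) / π := by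
  rw [reluCorr, arccos_eq_pi_div_two_sub_arcsin]
  field_simp
  ring

lemma hasDerivAt_sqrt_one_sub_sq_sub_mul_arccos {x : ℝ} (h₁ : -1 < x) (h₂ : x < 1) :
    HasDerivAt (fun x => √(1 - x ^ 2) - x * arccos x) (-arccos x) x := by
  have hpos : 0 < 1 - x ^ 2 := by nlinarith
  have hsqrt := ((hasDerivAt_pow 2 x).const_sub 1).sqrt hpos.ne'
  have harccos := (hasDerivAt_id' x).mul (hasDerivAt_arccos h₁.ne' h₂.ne)
  refine (hsqrt.sub harccos).congr_deriv ?_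
  field_simp
  ring

lemma integral_arccos {x : ℝ} (h₁ : -1 ≤ x) (h₂ : x ≤ 1) :
    ∫ u in x..1, arccos u = √(1 - x ^ 2) - x * arccos x := by
  have hF : Continuous fun x : ℝ => √(1 - x ^ 2) - x * arccos x := by fun_prop
  rw [← neg_neg (∫ u in x..1, arccos u), ← integral_neg,
    integral_eq_sub_of_hasDerivAt_of_le h₂ hF.continuousOn
      (fun u hu => hasDerivAt_sqrt_one_sub_sq_sub_mul_arccos (h₁.trans_lt hu.1) hu.2)
      (continuous_arccos.neg.intervalIntegrable x 1)]
  simp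

lemma reluCorr_sub_self_eq_integral {x : ℝ} (h₁ : -1 ≤ x) (h₂ : x ≤ 1) :
    reluCorr x - x = (∫ u in x..1, arccos u) / π := by
  rw [reluCorr_sub_self, integral_arccos h₁ h₂]

lemma sqrt_one_sub_cos {θ : ℝ} (h₀ : 0 ≤ θ) (h₁ : θ ≤ 2 * π) :
    √(1 - cos θ) = √2 * sin (θ / 2) := by
  have hsin : 0 ≤ sin (θ / 2) := sin_nonneg_of_nonneg_of_le_pi (by linarith) (by linarith)
  have hcos : 1 - cos θ = 2 * sin (θ / 2) ^ 2 := by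
    rw [show θ = 2 * (θ / 2) by ring, cos_two_mul', cos_sq']
    ring_nf
  rw [hcos, sqrt_mul zero_le_two, sqrt_sq hsin]

lemma sqrt_one_sub_eq_sqrt_two_mul_sin_half_arccos {u : ℝ} (h₁ : -1 ≤ u) (h₂ : u ≤ 1) :
    √(1 - u) = √2 * sin (arccos u / 2) := by
  conv_lhs => rw [← cos_arccos h₁ h₂]
  exact sqrt_one_sub_cos (arccos_nonneg u) (by linarith [arccos_le_pi u, pi_pos])

lemma sub_two_mul_sin_half_le {θ : ℝ} (h₀ : 0 ≤ θ) (h₁ : θ ≤ π) :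
    θ - 2 * sin (θ / 2) ≤ π ^ 3 / 24 * sin (θ / 2) ^ 3 := by
  have hcube := sin_ge_sub_cube (x := θ / 2) (by linarith)
  have hjordan : θ / 2 ≤ π / 2 * sin (θ / 2) := by
    have := mul_le_sin (x := θ / 2) (by linarith) (by linarith)
    rw [div_mul_eq_mul_div, div_le_iff₀ pi_pos] at this
    linarith
  have := pow_le_pow_left₀ (by linarith) hjordan 3
  rw [mul_pow] at this
  nlinarith

lemma sqrt_two_mul_sqrt_one_sub_le_arccos {u : ℝ} (h₁ : -1 ≤ u) (h₂ : u ≤ 1) :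
    √2 * √(1 - u) ≤ arccos u := by
  rw [sqrt_one_sub_eq_sqrt_two_mul_sin_half_arccos h₁ h₂, ← mul_assoc,
    mul_self_sqrt zero_le_two]
  linarith [sin_le (x := arccos u / 2) (by linarith [arccos_nonneg u])]

lemma arccos_le_sqrt_two_mul_sqrt_one_sub_add {u : ℝ} (h₁ : -1 ≤ u) (h₂ : u ≤ 1) :
    arccos u ≤ √2 * √(1 - u) + π ^ 3 / 24 * √(1 - u) ^ 3 := by
  have hs := sqrt_one_sub_eq_sqrt_two_mul_sin_half_arccos h₁ h₂
  have hsin : 0 ≤ sin (arccos u / 2) :=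
    sin_nonneg_of_nonneg_of_le_pi (by linarith [arccos_nonneg u])
      (by linarith [arccos_le_pi u, pi_pos])
  have hsin_le : sin (arccos u / 2) ≤ √(1 - u) := by
    rw [hs]
    exact le_mul_of_one_le_left hsin (by simp [one_le_sqrt])
  have hlin : √2 * √(1 - u) = 2 * sin (arccos u / 2) := by
    rw [hs, ← mul_assoc, mul_self_sqrt zero_le_two]
  have hcube : π ^ 3 / 24 * sin (arccos u / 2) ^ 3 ≤ π ^ 3 / 24 * √(1 - u) ^ 3 := by
    gcongr
  linarith [sub_two_mul_sin_half_le (arccos_nonneg u) (arccos_le_pi u)]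

lemma integral_one_sub_rpow {r : ℝ} (hr : -1 < r) (x : ℝ) :
    ∫ u in x..1, (1 - u) ^ r = (1 - x) ^ (r + 1) / (r + 1) := by
  rw [integral_comp_sub_left (· ^ r), integral_rpow (Or.inl hr), sub_self,
    zero_rpow (by linarith)]
  ring

lemma integral_sqrt_two_mul_sqrt_one_sub (x : ℝ) :
    ∫ u in x..1, √2 * √(1 - u) = 2 * √2 / 3 * (1 - x) ^ ((3 : ℝ) / 2) := by
  simp_rw [integral_const_mul, sqrt_eq_rpow (1 - _),
    integral_one_sub_rpow (by norm_num : (-1 : ℝ) < 1 / 2)]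
  norm_num
  ring

lemma reluCorr_remainder_eq_integral {x : ℝ} (h₁ : -1 ≤ x) (h₂ : x ≤ 1) :
    reluCorr x - x - 2 * √2 / (3 * π) * (1 - x) ^ ((3 : ℝ) / 2) =
      (∫ u in x..1, (arccos u - √2 * √(1 - u))) / π := by
  rw [integral_sub (continuous_arccos.intervalIntegrable x 1)
      ((by fun_prop : Continuous fun u => √2 * √(1 - u)).intervalIntegrable x 1),
    integral_sqrt_two_mul_sqrt_one_sub, reluCorr_sub_self_eq_integral h₁ h₂]
  field_simp

lemma reluCorr_remainder_mem_Icc {x : ℝ} (h₁ : -1 ≤ x) (h₂ : x ≤ 1) :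
    reluCorr x - x - 2 * √2 / (3 * π) * (1 - x) ^ ((3 : ℝ) / 2) ∈
      Icc 0 (π ^ 2 / 60 * (1 - x) ^ ((5 : ℝ) / 2)) := by
  rw [reluCorr_remainder_eq_integral h₁ h₂]
  constructor
  · refine div_nonneg (integral_nonneg h₂ fun u hu => ?_) pi_pos.le
    linarith [sqrt_two_mul_sqrt_one_sub_le_arccos (h₁.trans hu.1) hu.2]
  · have hbound : ∫ u in x..1, (arccos u - √2 * √(1 - u)) ≤
        ∫ u in x..1, π ^ 3 / 24 * (1 - u) ^ ((3 : ℝ) / 2) := by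
      refine integral_mono_on h₂ (Continuous.intervalIntegrable (by fun_prop) x 1)
        (Continuous.intervalIntegrable (by fun_prop (disch := norm_num)) x 1) fun u hu => ?_
      have h32 : √(1 - u) ^ 3 = (1 - u) ^ ((3 : ℝ) / 2) := by
        rw [sqrt_eq_rpow, ← rpow_natCast, ← rpow_mul (by linarith [hu.2])]
        norm_num
      rw [← h32]
      linarith [arccos_le_sqrt_two_mul_sqrt_one_sub_add (h₁.trans hu.1) hu.2]
    rw [integral_const_mul, integral_one_sub_rpow (by norm_num)] at hbound
    rw [div_le_iff₀ pi_pos]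
    refine hbound.trans_eq ?_
    norm_num
    ring

lemma reluCorr_sub_self_div_mem_Icc {x : ℝ} (h₁ : -1 ≤ x) (h₂ : x < 1) :
    (reluCorr x - x) / (1 - x) ^ ((3 : ℝ) / 2) ∈
      Icc (2 * √2 / (3 * π)) (2 * √2 / (3 * π) + π ^ 2 / 60 * (1 - x)) := by
  have hpos : 0 < (1 - x) ^ ((3 : ℝ) / 2) := rpow_pos_of_pos (by linarith) _
  have h52 : (1 - x) ^ ((5 : ℝ) / 2) = (1 - x) ^ ((3 : ℝ) / 2) * (1 - x) := by
    rw [← rpow_add_one' (by linarith) (by norm_num)]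
    norm_num
  obtain ⟨hlow, hupp⟩ := reluCorr_remainder_mem_Icc h₁ h₂.le
  rw [h52] at hupp
  constructor
  · rw [le_div_iff₀ hpos]
    linarith
  · rw [div_le_iff₀ hpos]
    linarith

/-- Asymptotic expansion `f(x) = x + (2√2/(3π))(1−x)^{3/2} + O((1−x)^{5/2})` as `x → 1⁻`,
and in particular `(f(x) − x)/(1−x)^{3/2} → 2√2/(3π)`. -/
theorem reluCorr_expansion_near_one :
    (∃ C > (0 : ℝ), ∀ᶠ x in 𝓝[<] (1 : ℝ),
        |reluCorr x - x - (2 * Real.sqrt 2 / (3 * π)) * (1 - x) ^ ((3 : ℝ) / 2)| ≤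
          C * (1 - x) ^ ((5 : ℝ) / 2)) ∧
    Tendsto (fun x : ℝ => (reluCorr x - x) / (1 - x) ^ ((3 : ℝ) / 2)) (𝓝[<] (1 : ℝ))
      (𝓝 (2 * Real.sqrt 2 / (3 * π))) := by
  have hnear : Ico (-1 : ℝ) 1 ∈ 𝓝[<] (1 : ℝ) := Ico_mem_nhdsLT (by norm_num)
  refine ⟨⟨π ^ 2 / 60, by positivity, ?_⟩, ?_⟩
  · filter_upwards [hnear] with x hx
    obtain ⟨hlow, hupp⟩ := reluCorr_remainder_mem_Icc hx.1 hx.2.le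
    rwa [abs_of_nonneg hlow]
  · have hlim : Tendsto (fun x : ℝ => 2 * √2 / (3 * π) + π ^ 2 / 60 * (1 - x)) (𝓝[<] 1)
        (𝓝 (2 * √2 / (3 * π))) :=
      tendsto_nhdsWithin_of_tendsto_nhds (Continuous.tendsto' (by fun_prop) _ _ (by simp))
    exact tendsto_of_tendsto_of_tendsto_of_le_of_le' tendsto_const_nhds hlim
      (eventually_of_mem hnear fun x hx => (reluCorr_sub_self_div_mem_Icc hx.1 hx.2).1)
      (eventually_of_mem hnear fun x hx => (reluCorr_sub_self_div_mem_Icc hx.1 hx.2).2)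
end

section
/- The quantile function Q of the folded standard normal distribution satisfies Q_{1−x} ~ √(−2 log x) as x → 0⁺, i.e. lim_{x→0⁺} Q_{1−x}/√(−2 log x) = 1. -/
/-!
Let `T t = P(|Z| > t)`, so that `T (Q_{1-x}) = x`. The Chernoff bound `T t ≤ 2 exp(-t²/2)` and the
crude lower bound `T t ≥ P(t < Z ≤ t + 1) ≥ φ(t + 1)` give `-2 log T t = t² + O(t)`, hence
`-2 log T t / t² → 1`. As `x → 0⁺` we have `Q_{1-x} → ∞`, so substituting `t = Q_{1-x}` gives
`-2 log x / Q_{1-x}² → 1`, and it remains to take square roots.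
-/

open Real Set Filter Topology MeasureTheory ProbabilityTheory
open scoped NNReal

lemma tendsto_add_sq_add_div_sq (a b : ℝ) :
    Tendsto (fun t : ℝ => ((t + a) ^ 2 + b) / t ^ 2) atTop (𝓝 1) := by
  have hlim : Tendsto (fun t : ℝ => (1 + a * t⁻¹) ^ 2 + b * t⁻¹ ^ 2) atTop (𝓝 1) := by
    have h0 := tendsto_inv_atTop_zero (𝕜 := ℝ)
    simpa using (((tendsto_const_nhds (x := (1 : ℝ))).add (h0.const_mul a)).pow 2).add
      ((h0.pow 2).const_mul b)
  refine hlim.congr' ?_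
  filter_upwards [eventually_ne_atTop 0] with t ht
  field_simp

lemma tendsto_div_sqrt_of_tendsto_div_sq {α : Type*} {l : Filter α} {f g : α → ℝ}
    (hf : ∀ᶠ a in l, 0 < f a) (h : Tendsto (fun a => g a / f a ^ 2) l (𝓝 1)) :
    Tendsto (fun a => f a / √(g a)) l (𝓝 1) := by
  have hcont : ContinuousAt (fun y : ℝ => (√y)⁻¹) 1 :=
    continuous_sqrt.continuousAt.inv₀ (by simp)
  have hlim : Tendsto (fun a => (√(g a / f a ^ 2))⁻¹) l (𝓝 1) := by
    simpa only [Function.comp_def, sqrt_one, inv_one] using hcont.tendsto.comp h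
  refine hlim.congr' ?_
  filter_upwards [hf] with a ha
  rw [sqrt_div' _ (sq_nonneg _), sqrt_sq ha.le, inv_div]

lemma hasSubgaussianMGF_id_gaussianReal (v : ℝ≥0) :
    HasSubgaussianMGF id v (gaussianReal 0 v) where
  integrable_exp_mul := integrable_exp_mul_gaussianReal
  mgf_le t := by simp [mgf_id_gaussianReal]

lemma gaussianReal_real_abs_gt_le (v : ℝ≥0) {t : ℝ} (ht : 0 ≤ t) :
    (gaussianReal 0 v).real {z | t < |z|} ≤ 2 * rexp (-t ^ 2 / (2 * v)) := by
  have hZ := hasSubgaussianMGF_id_gaussianReal v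
  calc (gaussianReal 0 v).real {z | t < |z|}
      ≤ (gaussianReal 0 v).real ({z | t ≤ id z} ∪ {z | t ≤ (-id) z}) := by
        refine measureReal_mono (fun z hz => ?_)
        rcases lt_abs.1 (show t < |z| from hz) with h | h
        · exact Or.inl h.le
        · exact Or.inr (by simpa using h.le)
    _ ≤ (gaussianReal 0 v).real {z | t ≤ id z} + (gaussianReal 0 v).real {z | t ≤ (-id) z} :=
        measureReal_union_le _ _
    _ ≤ rexp (-t ^ 2 / (2 * v)) + rexp (-t ^ 2 / (2 * v)) :=
        add_le_add (hZ.measure_ge_le ht) (hZ.neg.measure_ge_le ht)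
    _ = 2 * rexp (-t ^ 2 / (2 * v)) := by ring

lemma gaussianPDFReal_zero_one (u : ℝ) :
    gaussianPDFReal 0 1 u = (√(2 * π))⁻¹ * rexp (-u ^ 2 / 2) := by
  simp [gaussianPDFReal]

lemma gaussianPDFReal_add_one_le_gaussianReal_real_abs_gt {t : ℝ} (ht : 0 ≤ t) :
    gaussianPDFReal 0 1 (t + 1) ≤ (gaussianReal 0 1).real {z | t < |z|} := by
  have hsub : Ioc t (t + 1) ⊆ {z | t < |z|} := fun z hz => hz.1.trans_le (le_abs_self z)
  refine le_trans ?_ (measureReal_mono hsub)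
  rw [measureReal_def, gaussianReal_apply_eq_integral _ one_ne_zero,
    ENNReal.toReal_ofReal (setIntegral_nonneg measurableSet_Ioc
      fun x _ => gaussianPDFReal_nonneg 0 1 x)]
  calc gaussianPDFReal 0 1 (t + 1) = ∫ _ in Ioc t (t + 1), gaussianPDFReal 0 1 (t + 1) := by
        simp
    _ ≤ ∫ x in Ioc t (t + 1), gaussianPDFReal 0 1 x := by
      refine setIntegral_mono_on (integrableOn_const (by simp [Real.volume_Ioc]))
        (integrable_gaussianPDFReal 0 1).integrableOn measurableSet_Ioc fun x hx => ?_
      simp only [gaussianPDFReal_zero_one]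
      gcongr <;> linarith [hx.1, hx.2]

lemma neg_two_mul_log_gaussianPDFReal_zero_one (u : ℝ) :
    -2 * log (gaussianPDFReal 0 1 u) = u ^ 2 + log (2 * π) := by
  rw [gaussianPDFReal_zero_one, log_mul (by positivity) (exp_pos _).ne', log_exp, log_inv,
    log_sqrt (by positivity)]
  ring

lemma neg_two_mul_log_gaussianReal_real_abs_gt_mem_Icc {t : ℝ} (ht : 0 < t) :
    -2 * log ((gaussianReal 0 1).real {z | t < |z|}) ∈
      Icc (t ^ 2 - 2 * log 2) ((t + 1) ^ 2 + log (2 * π)) := by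
  have hlower := gaussianPDFReal_add_one_le_gaussianReal_real_abs_gt ht.le
  have hpdf := gaussianPDFReal_pos 0 1 (t + 1) one_ne_zero
  have hupper := gaussianReal_real_abs_gt_le 1 ht.le
  rw [NNReal.coe_one, mul_one] at hupper
  have hlog_upper := log_le_log (hpdf.trans_le hlower) hupper
  rw [log_mul two_ne_zero (exp_pos _).ne', log_exp] at hlog_upper
  have hlog_lower := log_le_log hpdf hlower
  rw [← neg_two_mul_log_gaussianPDFReal_zero_one]
  constructor <;> linarith

lemma tendsto_neg_two_mul_log_gaussianReal_real_abs_gt_div_sq :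
    Tendsto (fun t => -2 * log ((gaussianReal 0 1).real {z | t < |z|}) / t ^ 2) atTop (𝓝 1) := by
  refine tendsto_of_tendsto_of_tendsto_of_le_of_le'
    (by simpa using tendsto_add_sq_add_div_sq 0 (-2 * log 2))
    (tendsto_add_sq_add_div_sq 1 (log (2 * π))) ?_ ?_ <;>
  filter_upwards [eventually_gt_atTop 0] with t ht <;>
  gcongr ?_ / _
  exacts [(neg_two_mul_log_gaussianReal_real_abs_gt_mem_Icc ht).1,
    (neg_two_mul_log_gaussianReal_real_abs_gt_mem_Icc ht).2]

lemma measureReal_abs_gt_eq_one_sub {μ : Measure ℝ} [IsProbabilityMeasure μ] {q p : ℝ}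
    (hp : 0 ≤ p) (h : μ {z | |z| ≤ q} = ENNReal.ofReal p) : μ.real {z | q < |z|} = 1 - p := by
  have hcompl : {z : ℝ | q < |z|} = {z | |z| ≤ q}ᶜ := by ext; simp
  rw [hcompl, measureReal_compl (measurableSet_le continuous_abs.measurable measurable_const),
    probReal_univ, measureReal_def, h, ENNReal.toReal_ofReal hp]

lemma tendsto_nhdsGT_zero_atTop_of_gaussianReal_real_abs_gt_eq {q : ℝ → ℝ}
    (hq : ∀ᶠ x in 𝓝[>] 0, (gaussianReal 0 1).real {z | q x < |z|} = x) :
    Tendsto q (𝓝[>] 0) atTop := by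
  refine tendsto_atTop.2 fun M => ?_
  have hpos : 0 < (gaussianReal 0 1).real {z | max M 0 < |z|} :=
    (gaussianPDFReal_pos 0 1 _ one_ne_zero).trans_le
      (gaussianPDFReal_add_one_le_gaussianReal_real_abs_gt (le_max_right M 0))
  filter_upwards [hq, nhdsWithin_le_nhds (eventually_lt_nhds hpos)] with x hx hsmall
  by_contra! hlt
  have hmono : (gaussianReal 0 1).real {z | max M 0 < |z|} ≤ x :=
    hx ▸ measureReal_mono fun z hz => (hlt.trans_le (le_max_left M 0)).trans hz
  linarith

/-- The folded-Gaussian quantile function satisfies `Q_{1−x} ~ √(−2 log x)` as `x → 0⁺`. -/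
theorem folded_gaussian_quantile_asymptotic (Q : ℝ → ℝ)
    (hQ : ∀ p ∈ Set.Ioo (0 : ℝ) 1,
      (gaussianReal 0 1) {z : ℝ | |z| ≤ Q p} = ENNReal.ofReal p) :
    Tendsto (fun x : ℝ => Q (1 - x) / Real.sqrt (-2 * Real.log x)) (𝓝[>] (0 : ℝ))
      (𝓝 1) := by
  have htail : ∀ᶠ x in 𝓝[>] (0 : ℝ), (gaussianReal 0 1).real {z | Q (1 - x) < |z|} = x := by
    filter_upwards [Ioo_mem_nhdsGT zero_lt_one] with x hx
    rw [measureReal_abs_gt_eq_one_sub (sub_pos.2 hx.2).le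
      (hQ _ ⟨sub_pos.2 hx.2, sub_lt_self 1 hx.1⟩), sub_sub_cancel]
  have hQ_atTop := tendsto_nhdsGT_zero_atTop_of_gaussianReal_real_abs_gt_eq htail
  refine tendsto_div_sqrt_of_tendsto_div_sq (hQ_atTop.eventually_gt_atTop 0) ?_
  refine (tendsto_neg_two_mul_log_gaussianReal_real_abs_gt_div_sq.comp hQ_atTop).congr' ?_
  filter_upwards [htail] with x hx
  simp only [Function.comp_apply, hx]
end
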